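/- arXiv:2007.09182 — 9 statements merged into one kernel-verified Lean document; each statement's English description precedes it below -/
import Mathlib

section
/- If the allocation rule selects a trip maximizing the weighted minimum surplus wm(A) = |A| · min_{i∈A}(v_i − c_i) over a fixed family of alternatives 𝒜 (with ties broken independently of bids), then the allocation is monotone: if passenger i is in a winning trip under values v, and i raises their value to v'_i ≥ v_i while all other values stay fixed, then i is contained in some trip maximizing the weighted minimum surplus under the new values. -/
open Finset

/-- Minimum surplus of a trip: `min_{i ∈ A} s i` (0 for the empty set). -/
noncomputable def smin {ι : Type*} (s : ι → ℝ) (A : Finset ι) : ℝ :=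
  if h : A.Nonempty then A.inf' h s else 0

/-- Weighted minimum surplus: `wm A = |A| · min_{i ∈ A} s i`. -/
noncomputable def wm {ι : Type*} (s : ι → ℝ) (A : Finset ι) : ℝ :=
  A.card * smin s A

lemma wm_mono_on {ι : Type*} (s t : ι → ℝ) (A : Finset ι)
    (h : ∀ j ∈ A, s j ≤ t j) : wm s A ≤ wm t A := by
  unfold wm smin
  by_cases hA : A.Nonempty
  · simp only [dif_pos hA]
    have : A.inf' hA s ≤ A.inf' hA t := by
      apply le_inf'
      intro j hj
      exact le_trans (inf'_le s hj) (h j hj)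
    exact mul_le_mul_of_nonneg_left this (by positivity)
  · simp [dif_neg hA]

lemma wm_congr {ι : Type*} (s t : ι → ℝ) (A : Finset ι)
    (h : ∀ j ∈ A, s j = t j) : wm s A = wm t A :=
  le_antisymm (wm_mono_on s t A fun j hj => (h j hj).le)
    (wm_mono_on t s A fun j hj => (h j hj).ge)

/-- The allocation rule maximizing the weighted minimum surplus is
allocation monotone: if `i` is in a winning (wm-maximizing) trip under values `v`
and raises their value to `v' i ≥ v i` (all other values fixed), then `i` is in
some wm-maximizing trip under the new values. -/
theorem wms_allocation_monotone {ι : Type*} [DecidableEq ι]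
    (𝒜 : Finset (Finset ι)) (v v' c : ι → ℝ) (i : ι) (Astar : Finset ι)
    (hmem : Astar ∈ 𝒜) (hi : i ∈ Astar)
    (hwin : ∀ A ∈ 𝒜, wm (fun j => v j - c j) A ≤ wm (fun j => v j - c j) Astar)
    (hup : v i ≤ v' i) (hfix : ∀ j, j ≠ i → v' j = v j) :
    ∃ B ∈ 𝒜, i ∈ B ∧
      ∀ A ∈ 𝒜, wm (fun j => v' j - c j) A ≤ wm (fun j => v' j - c j) B := by
  set s := fun j => v j - c j
  set s' := fun j => v' j - c j
  have hss' : ∀ j, s j ≤ s' j := by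
    intro j
    by_cases hj : j = i
    · subst hj; simpa [s, s'] using hup
    · simp [s, s', hfix j hj]
  -- maximize wm s' over trips containing i
  have hne : (𝒜.filter (fun A => i ∈ A)).Nonempty :=
    ⟨Astar, mem_filter.2 ⟨hmem, hi⟩⟩
  obtain ⟨B, hB, hBmax⟩ := Finset.exists_max_image _ (wm s') hne
  rw [mem_filter] at hB
  refine ⟨B, hB.1, hB.2, ?_⟩
  intro A hA
  by_cases hiA : i ∈ A
  · exact hBmax A (mem_filter.2 ⟨hA, hiA⟩)
  · have h1 : wm s' A = wm s A := by
      apply wm_congr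
      intro j hj
      have : j ≠ i := fun h => hiA (h ▸ hj)
      simp [s, s', hfix j this]
    calc wm s' A = wm s A := h1
      _ ≤ wm s Astar := hwin A hA
      _ ≤ wm s' Astar := wm_mono_on s s' Astar fun j _ => hss' j
      _ ≤ wm s' B := hBmax Astar (mem_filter.2 ⟨hmem, hi⟩)
end

section
/- In the WMS auction, if passenger i raises their value above the WMS price, they win: suppose A'_i exists; if v_i > c_i + wm*_i / |A'_i|, then i belongs to the winning trip A* (the maximizer of the weighted minimum surplus under the tie-breaking rule). -/
open Finset

/-- In the WMS auction, a passenger bidding above the WMS price wins: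
if `A'_i` exists and `v i > c i + wm*_i / |A'_i|`, then `i` belongs to the winning
trip `A*` (the wm-maximizer under a deterministic, value-independent tie-breaking
relation `tb`, with respect to which `A'_i` wins ties against trips of value `wm*_i`). -/
theorem wms_above_price_wins {ι : Type*} [DecidableEq ι]
    (𝒜 : Finset (Finset ι)) (v c : ι → ℝ) (i : ι)
    (s : ι → ℝ) (hs : s = fun j => v j - c j)
    (tb : Finset ι → Finset ι → Prop)
    (htb_asymm : ∀ X Y, tb X Y → ¬ tb Y X)
    (wmstar : ℝ)
    (hub : ∀ A ∈ 𝒜, i ∉ A → wm s A ≤ wmstar)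
    (hnn : 0 ≤ wmstar)
    (hatt : wmstar = 0 ∨ ∃ A ∈ 𝒜, i ∉ A ∧ wm s A = wmstar)
    (Ai : Finset ι)
    (hAimem : Ai ∈ 𝒜) (hiAi : i ∈ Ai)
    (hAidef : (Ai = {i} ∧ {i} ∈ 𝒜) ∨
      (1 < Ai.card ∧ wmstar ≤ Ai.card * smin s (Ai.erase i)))
    (hAimax : ∀ A ∈ 𝒜, i ∈ A → 1 < A.card →
      wmstar ≤ A.card * smin s (A.erase i) → A.card ≤ Ai.card)
    (hAitie : ∀ A ∈ 𝒜, A ≠ Ai → wm s A = wmstar → tb Ai A)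
    (hhigh : v i > c i + wmstar / Ai.card)
    (Astar : Finset ι) (hAstar : Astar ∈ 𝒜)
    (hwin : ∀ A ∈ 𝒜, A ≠ Astar →
      wm s A < wm s Astar ∨ (wm s A = wm s Astar ∧ tb Astar A)) :
    i ∈ Astar := by
  by_contra hni
  have hneq : Ai ≠ Astar := by rintro rfl; exact hni hiAi
  have hAine : Ai.Nonempty := ⟨i, hiAi⟩
  have hcard : (0 : ℝ) < Ai.card := by
    exact_mod_cast Finset.card_pos.mpr hAine
  have hsi : wmstar / Ai.card < s i := by
    rw [hs]; dsimp only; linarith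
  -- key: wmstar ≤ wm s Ai
  have hkey : wmstar ≤ wm s Ai := by
    have hle : wmstar / Ai.card ≤ smin s Ai := by
      rw [smin, dif_pos hAine]
      apply Finset.le_inf'
      intro j hj
      rcases eq_or_ne j i with rfl | hji
      · exact hsi.le
      · rcases hAidef with ⟨h1, _⟩ | ⟨h1, h2⟩
        · exfalso; rw [h1] at hj; exact hji (Finset.mem_singleton.mp hj)
        · have hjer : j ∈ Ai.erase i := Finset.mem_erase.mpr ⟨hji, hj⟩
          have hern : (Ai.erase i).Nonempty := ⟨j, hjer⟩
          have h3 : wmstar / Ai.card ≤ smin s (Ai.erase i) := by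
            rw [div_le_iff₀ hcard] at *
            calc wmstar ≤ Ai.card * smin s (Ai.erase i) := h2
              _ = smin s (Ai.erase i) * Ai.card := by ring
          calc wmstar / Ai.card ≤ smin s (Ai.erase i) := h3
            _ ≤ s j := by
                rw [smin, dif_pos hern]; exact Finset.inf'_le s hjer
    calc wmstar = Ai.card * (wmstar / Ai.card) := by field_simp
      _ ≤ Ai.card * smin s Ai := by
          exact mul_le_mul_of_nonneg_left hle hcard.le
      _ = wm s Ai := rfl
  have hwAstar : wm s Astar ≤ wmstar := hub Astar hAstar hni
  rcases hwin Ai hAimem hneq with h | ⟨heq, htb⟩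
  · linarith
  · have hws : wm s Astar = wmstar := le_antisymm hwAstar (heq ▸ hkey)
    exact htb_asymm _ _ (hAitie Astar hAstar (fun h => hneq h.symm) hws) htb
end

section
/- For a downward-closed family of alternatives 𝒜, the WMS auction has surplus welfare ratio at most the harmonic number H_k where k = max_{A∈𝒜} |A|: for every A ∈ 𝒜, V_s(A) ≤ H_k · V_s(A*), where A* maximizes wm over 𝒜. -/
open Finset

/-- The k-th harmonic number `H_k = Σ_{j=1}^{k} 1/j`. -/
noncomputable def harm (k : ℕ) : ℝ := ∑ j ∈ Finset.range k, (1 : ℝ) / (j + 1)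

lemma harm_mono : Monotone harm := by
  intro m n hmn
  apply Finset.sum_le_sum_of_subset_of_nonneg (Finset.range_subset_range.2 hmn)
  intro j _ _
  positivity

lemma harm_nonneg (k : ℕ) : 0 ≤ harm k := by
  apply Finset.sum_nonneg
  intro j _
  positivity

/-- For a downward-closed family `𝒜`, the WMS auction has surplus
welfare ratio at most `H_k` where `k = max_{A∈𝒜} |A|`: for every `A ∈ 𝒜`,
`V_s(A) ≤ H_k · V_s(A*)`, where `A*` maximizes `wm` over `𝒜`. -/
theorem wms_welfare_ratio_harmonic {ι : Type*} [DecidableEq ι]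
    (𝒜 : Finset (Finset ι)) (s : ι → ℝ)
    (hs : ∀ i, 0 ≤ s i)
    (h𝒜ne : 𝒜.Nonempty) (hne : ∀ A ∈ 𝒜, A.Nonempty)
    (hdc : ∀ A ∈ 𝒜, ∀ B ⊆ A, B.Nonempty → B ∈ 𝒜)
    (Astar : Finset ι) (hAstar : Astar ∈ 𝒜)
    (hwin : ∀ A ∈ 𝒜, wm s A ≤ wm s Astar)
    (k : ℕ) (hub : ∀ A ∈ 𝒜, A.card ≤ k) (hatt : ∃ A ∈ 𝒜, A.card = k) :
    ∀ A ∈ 𝒜, (∑ i ∈ A, s i) ≤ harm k * ∑ i ∈ Astar, s i := by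
  set W := wm s Astar with hW
  have hAstarne := hne Astar hAstar
  -- W ≥ 0
  have hWnn : 0 ≤ W := by
    obtain ⟨i, hi, hieq⟩ := Finset.exists_mem_eq_inf' hAstarne s
    have : smin s Astar = s i := by simp [smin, hAstarne, hieq]
    have h1 : 0 ≤ smin s Astar := this ▸ hs i
    have h2 : (0:ℝ) ≤ (Astar.card : ℝ) := by positivity
    exact mul_nonneg h2 h1
  -- W ≤ Σ_{Astar} s
  have hWle : W ≤ ∑ i ∈ Astar, s i := by
    have : W = ∑ _i ∈ Astar, smin s Astar := by
      simp [hW, wm, mul_comm]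
    rw [this]
    apply Finset.sum_le_sum
    intro i hi
    simp only [smin, dif_pos hAstarne]
    exact Finset.inf'_le s hi
  -- main induction
  have key : ∀ n : ℕ, ∀ A ∈ 𝒜, A.card = n → (∑ i ∈ A, s i) ≤ harm n * W := by
    intro n
    induction n using Nat.strong_induction_on with
    | _ n ih =>
      intro A hA hcard
      have hAne := hne A hA
      have hn : 0 < n := hcard ▸ Finset.card_pos.2 hAne
      obtain ⟨i0, hi0, hi0eq⟩ := Finset.exists_mem_eq_inf' hAne s
      have hsmin : smin s A = s i0 := by simp [smin, hAne, hi0eq]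
      -- s i0 ≤ W / n
      have hsi0 : (n : ℝ) * s i0 ≤ W := by
        have := hwin A hA
        rwa [wm, hsmin, hcard] at this
      have hsum : ∑ i ∈ A, s i = (∑ i ∈ A.erase i0, s i) + s i0 := by
        rw [← Finset.add_sum_erase A s hi0]; ring
      have hharm : harm n = harm (n - 1) + 1 / n := by
        have : n = (n - 1) + 1 := (Nat.succ_pred_eq_of_pos hn).symm
        have hc : ((n - 1 : ℕ) : ℝ) + 1 = n := by
          rw [Nat.cast_sub hn]; push_cast; ring
        rw [this, harm, harm, Finset.sum_range_succ, hc]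
        simp [Nat.sub_add_cancel hn]
      have herase : (∑ i ∈ A.erase i0, s i) ≤ harm (n - 1) * W := by
        rcases (A.erase i0).eq_empty_or_nonempty with he | he
        · rw [he]
          simp only [Finset.sum_empty]
          exact mul_nonneg (harm_nonneg _) hWnn
        · have hmem : A.erase i0 ∈ 𝒜 := hdc A hA _ (Finset.erase_subset _ _) he
          have hcarde : (A.erase i0).card = n - 1 := by
            rw [Finset.card_erase_of_mem hi0, hcard]
          exact ih (n - 1) (Nat.sub_lt hn one_pos) _ hmem hcarde
      have hsi0' : s i0 ≤ 1 / n * W := by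
        rw [div_mul_eq_mul_div, mul_comm]
        rw [le_div_iff₀ (by positivity)]
        linarith [hsi0]
      rw [hsum, hharm]
      nlinarith [herase, hsi0']
  intro A hA
  calc (∑ i ∈ A, s i) ≤ harm A.card * W := key A.card A hA rfl
    _ ≤ harm k * W := mul_le_mul_of_nonneg_right (harm_mono (hub A hA)) hWnn
    _ ≤ harm k * ∑ i ∈ Astar, s i := mul_le_mul_of_nonneg_left hWle (harm_nonneg k)
end

section
/- The harmonic-number bound on the WMS surplus welfare ratio is tight: for every k ≥ 1 and every w > 0 there exists a downward-closed family 𝒜 of alternatives with max_{A∈𝒜}|A| = k and surpluses s_i ≥ 0 such that, under a suitable tie-breaking rule, the WMS winner A* satisfies max_{A∈𝒜} V_s(A) = H_k · V_s(A*). (Take B with k passengers of surpluses w/1, w/2, …, w/k, C with k passengers each of surplus w/k, 𝒜 = P(B) ∪ P(C) with C preferred in ties; then A* = C, V_s(C) = w, and V_s(B) = w·H_k.) -/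
open Finset

/-- The harmonic-number bound on the WMS surplus welfare ratio is tight:
for every `k ≥ 1` and `w > 0` there are nonnegative surpluses and a downward-closed
family `𝒜` with `max_{A∈𝒜}|A| = k` such that some wm-maximizer `A*` (the WMS winner
under a suitable tie-breaking rule) satisfies `max_{A∈𝒜} V_s(A) = H_k · V_s(A*)`. -/
theorem wms_harmonic_bound_tight :
    ∀ k : ℕ, 1 ≤ k → ∀ w : ℝ, 0 < w →
    ∃ (s : Fin k ⊕ Fin k → ℝ) (𝒜 : Finset (Finset (Fin k ⊕ Fin k)))
      (Astar : Finset (Fin k ⊕ Fin k)),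
      (∀ i, 0 ≤ s i) ∧
      (∀ A ∈ 𝒜, A.Nonempty) ∧
      (∀ A ∈ 𝒜, ∀ B ⊆ A, B.Nonempty → B ∈ 𝒜) ∧
      (∀ A ∈ 𝒜, A.card ≤ k) ∧ (∃ A ∈ 𝒜, A.card = k) ∧
      Astar ∈ 𝒜 ∧ (∀ A ∈ 𝒜, wm s A ≤ wm s Astar) ∧
      (∑ i ∈ Astar, s i) = w ∧
      (∀ A ∈ 𝒜, (∑ i ∈ A, s i) ≤ harm k * ∑ i ∈ Astar, s i) ∧
      (∃ A ∈ 𝒜, (∑ i ∈ A, s i) = harm k * ∑ i ∈ Astar, s i) := by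
  intro k hk w hw
  classical
  have hk0 : 0 < k := hk
  have hkR : (0 : ℝ) < k := by exact_mod_cast hk0
  set s : Fin k ⊕ Fin k → ℝ :=
    Sum.elim (fun j => w / (j.1 + 1)) (fun _ => w / k) with hsdef
  let inlE : Fin k ↪ Fin k ⊕ Fin k := ⟨Sum.inl, Sum.inl_injective⟩
  let inrE : Fin k ↪ Fin k ⊕ Fin k := ⟨Sum.inr, Sum.inr_injective⟩
  set B : Finset (Fin k ⊕ Fin k) := univ.map inlE with hBdef
  set C : Finset (Fin k ⊕ Fin k) := univ.map inrE with hCdef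
  set 𝒜 : Finset (Finset (Fin k ⊕ Fin k)) :=
    univ.powerset.filter
      (fun A => A.Nonempty ∧ ((∀ x ∈ A, x.isLeft) ∨ (∀ x ∈ A, x.isRight))) with h𝒜def
  have hmem : ∀ A, A ∈ 𝒜 ↔
      A.Nonempty ∧ ((∀ x ∈ A, x.isLeft) ∨ (∀ x ∈ A, x.isRight)) := by
    intro A; simp [h𝒜def]
  have hz : (⟨0, hk0⟩ : Fin k) ∈ (univ : Finset (Fin k)) := mem_univ _
  have hCne : C.Nonempty := ⟨inrE ⟨0, hk0⟩, mem_map_of_mem _ hz⟩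
  have hBne : B.Nonempty := ⟨inlE ⟨0, hk0⟩, mem_map_of_mem _ hz⟩
  have hCcard : C.card = k := by simp [hCdef]
  have hBcard : B.card = k := by simp [hBdef]
  -- membership of B and C in 𝒜
  have hCmem : C ∈ 𝒜 := by
    rw [hmem]
    refine ⟨hCne, Or.inr ?_⟩
    intro x hx
    rcases mem_map.1 hx with ⟨j, _, rfl⟩
    rfl
  have hBmem : B ∈ 𝒜 := by
    rw [hmem]
    refine ⟨hBne, Or.inl ?_⟩
    intro x hx
    rcases mem_map.1 hx with ⟨j, _, rfl⟩
    rfl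
  -- values of s
  have hsR : ∀ x, x.isRight → s x = w / k := by
    intro x hx; rcases Sum.isRight_iff.1 hx with ⟨j, rfl⟩; rfl
  have hsnn : ∀ i, 0 ≤ s i := by
    intro i
    rcases i with j | j <;> simp only [hsdef, Sum.elim_inl, Sum.elim_inr] <;> positivity
  -- smin of an all-right nonempty set is w/k
  have hsminR : ∀ A : Finset (Fin k ⊕ Fin k), (hA : A.Nonempty) →
      (∀ x ∈ A, x.isRight) → smin s A = w / k := by
    intro A hA hR
    rw [smin, dif_pos hA]
    obtain ⟨x, hx, hxe⟩ := exists_mem_eq_inf' hA s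
    rw [hxe, hsR x (hR x hx)]
  -- wm s C = w
  have hwmC : wm s C = w := by
    rw [wm, hsminR C hCne (by
      intro x hx; rcases mem_map.1 hx with ⟨j, _, rfl⟩; rfl), hCcard]
    field_simp
  -- sum over C = w
  have hsumC : (∑ i ∈ C, s i) = w := by
    rw [hCdef, sum_map]
    have : ∀ j : Fin k, s (inrE j) = w / k := fun j => rfl
    rw [sum_congr rfl (fun j _ => this j), sum_const, card_univ, Fintype.card_fin,
      nsmul_eq_mul]
    field_simp
  -- sum over B = harm k * w
  have hsumB : (∑ i ∈ B, s i) = harm k * w := by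
    rw [hBdef, sum_map]
    have h1 : ∀ j : Fin k, s (inlE j) = w / ((j : ℕ) + 1) := fun j => rfl
    rw [sum_congr rfl (fun j _ => h1 j), Fin.sum_univ_eq_sum_range (fun j => w / (j + 1))]
    rw [harm, sum_mul]
    refine sum_congr rfl fun j _ => ?_
    push_cast
    ring
  -- harm k ≥ 1
  have hharm1 : (1 : ℝ) ≤ harm k := by
    have h0 : (0 : ℕ) ∈ Finset.range k := mem_range.2 hk0
    have := single_le_sum (f := fun j : ℕ => (1 : ℝ) / (j + 1))
      (fun j _ => by positivity) h0
    simpa [harm] using this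
  -- wm bound
  have hwm : ∀ A ∈ 𝒜, wm s A ≤ wm s C := by
    intro A hA
    rw [hwmC]
    rcases (hmem A).1 hA with ⟨hAne, hL | hR⟩
    · -- all left
      rw [wm, smin, dif_pos hAne]
      obtain ⟨x, hx, hxe⟩ := exists_mem_eq_inf' hAne s
      rcases Sum.isLeft_iff.1 (hL x hx) with ⟨j, rfl⟩
      have hsx : s (Sum.inl j) = w / ((j : ℕ) + 1) := rfl
      -- every element of A is inl i with i ≤ j
      have hsub : A ⊆ (Finset.Iic j).map inlE := by
        intro y hy
        rcases Sum.isLeft_iff.1 (hL y hy) with ⟨i, rfl⟩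
        have hle : A.inf' hAne s ≤ s (Sum.inl i) := inf'_le _ hy
        rw [hxe] at hle
        have hsi : s (Sum.inl i) = w / ((i : ℕ) + 1) := rfl
        rw [hsx, hsi] at hle
        have hij : (i : ℕ) ≤ (j : ℕ) := by
          by_contra hcon
          push_neg at hcon
          have : w / ((i : ℕ) + 1) < w / ((j : ℕ) + 1) := by
            apply div_lt_div_of_pos_left hw (by positivity)
            exact_mod_cast Nat.succ_lt_succ hcon
          linarith
        exact mem_map_of_mem _ (mem_Iic.2 (Fin.le_def.2 hij))
      have hcard : A.card ≤ (j : ℕ) + 1 := by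
        have := card_le_card hsub
        rwa [card_map, Fin.card_Iic] at this
      calc (A.card : ℝ) * (A.inf' hAne s)
          ≤ ((j : ℕ) + 1) * (w / ((j : ℕ) + 1)) := by
            rw [hxe, hsx]
            apply mul_le_mul (by exact_mod_cast hcard) le_rfl (by positivity) (by positivity)
        _ = w := by field_simp
    · -- all right
      rw [wm, hsminR A hAne hR]
      have hsub : A ⊆ C := by
        intro y hy
        rcases Sum.isRight_iff.1 (hR y hy) with ⟨i, rfl⟩
        exact mem_map_of_mem _ (mem_univ i)
      have hcard : A.card ≤ k := by
        have := card_le_card hsub; rwa [hCcard] at this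
      calc (A.card : ℝ) * (w / k) ≤ (k : ℝ) * (w / k) := by
            apply mul_le_mul_of_nonneg_right (by exact_mod_cast hcard) (by positivity)
        _ = w := by field_simp
  -- sum bound
  have hsumbound : ∀ A ∈ 𝒜, (∑ i ∈ A, s i) ≤ harm k * w := by
    intro A hA
    rcases (hmem A).1 hA with ⟨hAne, hL | hR⟩
    · have hsub : A ⊆ B := by
        intro y hy
        rcases Sum.isLeft_iff.1 (hL y hy) with ⟨i, rfl⟩
        exact mem_map_of_mem _ (mem_univ i)
      calc (∑ i ∈ A, s i) ≤ ∑ i ∈ B, s i :=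
            sum_le_sum_of_subset_of_nonneg hsub (fun i _ _ => hsnn i)
        _ = harm k * w := hsumB
    · have hsub : A ⊆ C := by
        intro y hy
        rcases Sum.isRight_iff.1 (hR y hy) with ⟨i, rfl⟩
        exact mem_map_of_mem _ (mem_univ i)
      calc (∑ i ∈ A, s i) ≤ ∑ i ∈ C, s i :=
            sum_le_sum_of_subset_of_nonneg hsub (fun i _ _ => hsnn i)
        _ = w := hsumC
        _ ≤ harm k * w := by nlinarith
  refine ⟨s, 𝒜, C, hsnn, ?_, ?_, ?_, ⟨C, hCmem, hCcard⟩, hCmem, hwm, hsumC, ?_, ?_⟩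
  · intro A hA; exact ((hmem A).1 hA).1
  · intro A hA B' hB' hB'ne
    rcases (hmem A).1 hA with ⟨_, hL | hR⟩
    · exact (hmem B').2 ⟨hB'ne, Or.inl fun x hx => hL x (hB' hx)⟩
    · exact (hmem B').2 ⟨hB'ne, Or.inr fun x hx => hR x (hB' hx)⟩
  · intro A hA
    rcases (hmem A).1 hA with ⟨_, hL | hR⟩
    · have hsub : A ⊆ B := by
        intro y hy
        rcases Sum.isLeft_iff.1 (hL y hy) with ⟨i, rfl⟩
        exact mem_map_of_mem _ (mem_univ i)
      have := card_le_card hsub; rwa [hBcard] at this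
    · have hsub : A ⊆ C := by
        intro y hy
        rcases Sum.isRight_iff.1 (hR y hy) with ⟨i, rfl⟩
        exact mem_map_of_mem _ (mem_univ i)
      have := card_le_card hsub; rwa [hCcard] at this
  · intro A hA; rw [hsumC]; exact hsumbound A hA
  · exact ⟨B, hBmem, by rw [hsumC, hsumB]⟩
end

section
/- Combined welfare-to-profit bound: if 𝒜 is downward closed and the WMS winner A* satisfies |A*| ≥ 2, then profit_s(A*) ≥ max_{A∈𝒜} V_s(A) / (H_k · k), where k = max_{A∈𝒜}|A| and H_k is the k-th harmonic number. -/
open Finset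

lemma harm_succ (n : ℕ) : harm (n + 1) = harm n + 1 / (n + 1) :=
  Finset.sum_range_succ _ n

lemma harm_mono_s10 {m k : ℕ} (h : m ≤ k) : harm m ≤ harm k := by
  apply Finset.sum_le_sum_of_subset_of_nonneg (Finset.range_subset_range.2 h)
  intro j _ _; positivity

lemma harm_pos {k : ℕ} (h : 1 ≤ k) : 0 < harm k := by
  calc (0:ℝ) < harm 1 := by norm_num [harm]
    _ ≤ harm k := harm_mono_s10 h

lemma welfare_aux {ι : Type*} [DecidableEq ι]
    (𝒜 : Finset (Finset ι)) (s : ι → ℝ)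
    (hne : ∀ A ∈ 𝒜, A.Nonempty)
    (hdc : ∀ A ∈ 𝒜, ∀ B ⊆ A, B.Nonempty → B ∈ 𝒜)
    (W : ℝ)
    (hwin : ∀ A ∈ 𝒜, wm s A ≤ W) :
    ∀ A ∈ 𝒜, ∑ i ∈ A, s i ≤ harm A.card * W := by
  intro A
  induction A using Finset.strongInduction with
  | _ A ih =>
    intro hA
    have hAne := hne A hA
    obtain ⟨i, hi, hmin⟩ := Finset.exists_min_image A s hAne
    have hsmin : smin s A = s i := by
      rw [smin, dif_pos hAne]
      exact le_antisymm (Finset.inf'_le _ hi) (Finset.le_inf' _ _ hmin)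
    have hwmA : (A.card : ℝ) * s i ≤ W := by
      have := hwin A hA; rwa [wm, hsmin] at this
    have hcpos : 0 < (A.card : ℝ) := by exact_mod_cast hAne.card_pos
    have hsiW : s i ≤ W / A.card := by
      rw [le_div_iff₀ hcpos]; linarith [hwmA]
    have hsum : ∑ j ∈ A, s j = s i + ∑ j ∈ A.erase i, s j :=
      (Finset.add_sum_erase A s hi).symm
    rcases Finset.eq_empty_or_nonempty (A.erase i) with he | he
    · have hA1 : A = {i} := by
        rcases (Finset.erase_eq_empty_iff A i).1 he with h | h
        · exact absurd hi (by simp [h])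
        · exact h
      rw [hA1]
      simp only [Finset.sum_singleton, Finset.card_singleton]
      calc s i ≤ W / 1 := by rw [hA1] at hsiW; simpa using hsiW
        _ = harm 1 * W := by norm_num [harm]
    · have hsub : A.erase i ⊂ A := Finset.erase_ssubset hi
      have hmem : A.erase i ∈ 𝒜 := hdc A hA _ (Finset.erase_subset i A) he
      have hrec := ih _ hsub hmem
      have hcard : A.card = (A.erase i).card + 1 := by
        rw [Finset.card_erase_of_mem hi]
        have := hAne.card_pos; omega
      rw [hsum, hcard, harm_succ]
      have hsiW' : s i ≤ W / ((A.erase i).card + 1 : ℝ) := by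
        rw [hcard] at hsiW; push_cast at hsiW; exact hsiW
      have : (1 : ℝ) / ((A.erase i).card + 1) * W = W / ((A.erase i).card + 1) := by
        ring
      rw [add_mul, this]
      linarith

/-- Combined welfare-to-profit bound: if `𝒜` is downward closed
and the WMS winner `A*` has `|A*| ≥ 2`, then
`profit_s(A*) = Σ_{i∈A*} wm*_i/|A'_i| ≥ max_{A∈𝒜} V_s(A) / (H_k · k)`,
where `k = max_{A∈𝒜}|A|`. -/
theorem wms_welfare_to_profit_bound {ι : Type*} [DecidableEq ι]
    (𝒜 : Finset (Finset ι)) (s : ι → ℝ)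
    (hs : ∀ i, 0 ≤ s i) (hne : ∀ A ∈ 𝒜, A.Nonempty)
    (hdc : ∀ A ∈ 𝒜, ∀ B ⊆ A, B.Nonempty → B ∈ 𝒜)
    (Astar : Finset ι) (hAstar : Astar ∈ 𝒜)
    (hwin : ∀ A ∈ 𝒜, wm s A ≤ wm s Astar)
    (hcard : 2 ≤ Astar.card)
    (k : ℕ) (hk : ∀ A ∈ 𝒜, A.card ≤ k) (hkatt : ∃ A ∈ 𝒜, A.card = k)
    (wmstar : ι → ℝ)
    (hws : ∀ i ∈ Astar,
      (∀ A ∈ 𝒜, i ∉ A → wm s A ≤ wmstar i) ∧ 0 ≤ wmstar i ∧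
      (wmstar i = 0 ∨ ∃ A ∈ 𝒜, i ∉ A ∧ wm s A = wmstar i))
    (Ai : ι → Finset ι) (hAi : ∀ i ∈ Astar, Ai i ∈ 𝒜) :
    ∀ A ∈ 𝒜, (∑ i ∈ A, s i) / (harm k * k) ≤ ∑ i ∈ Astar, wmstar i / (Ai i).card := by
  intro A hA
  have hAsne : Astar.Nonempty := Finset.card_pos.1 (by omega)
  have hsminA : 0 ≤ smin s Astar := by
    rw [smin, dif_pos hAsne]; exact Finset.le_inf' _ _ (fun j _ => hs j)
  have hW0 : 0 ≤ wm s Astar := mul_nonneg (Nat.cast_nonneg _) hsminA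
  have hk2 : 2 ≤ k := le_trans hcard (hk Astar hAstar)
  have hkpos : (0:ℝ) < k := by exact_mod_cast (by omega : 0 < k)
  have hharm : 0 < harm k := harm_pos (by omega)
  have hc2 : (2:ℝ) ≤ Astar.card := by exact_mod_cast hcard
  -- welfare bound
  have hwel : ∑ i ∈ A, s i ≤ harm k * wm s Astar := by
    calc ∑ i ∈ A, s i ≤ harm A.card * wm s Astar :=
          welfare_aux 𝒜 s hne hdc _ hwin A hA
      _ ≤ harm k * wm s Astar :=
          mul_le_mul_of_nonneg_right (harm_mono_s10 (hk A hA)) hW0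
  -- profit bound
  have hterm : ∀ i ∈ Astar,
      ((Astar.card : ℝ) - 1) * smin s Astar / k ≤ wmstar i / (Ai i).card := by
    intro i hi
    have hEne : (Astar.erase i).Nonempty := by
      rw [← Finset.card_pos, Finset.card_erase_of_mem hi]; omega
    have hE : Astar.erase i ∈ 𝒜 := hdc Astar hAstar _ (Finset.erase_subset i Astar) hEne
    have h1 : wm s (Astar.erase i) ≤ wmstar i :=
      (hws i hi).1 _ hE (Finset.notMem_erase i Astar)
    have hsminE : smin s Astar ≤ smin s (Astar.erase i) := by
      unfold smin
      rw [dif_pos hAsne, dif_pos hEne]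
      exact Finset.le_inf' _ _ (fun j hj => Finset.inf'_le _ (Finset.mem_of_mem_erase hj))
    have h2 : ((Astar.card : ℝ) - 1) * smin s Astar ≤ wm s (Astar.erase i) := by
      rw [wm, Finset.card_erase_of_mem hi]
      have hcast : ((Astar.card - 1 : ℕ) : ℝ) = (Astar.card : ℝ) - 1 := by
        have : 1 ≤ Astar.card := by omega
        push_cast [this]; ring
      rw [hcast]
      apply mul_le_mul_of_nonneg_left hsminE (by linarith)
    have hw0 : 0 ≤ wmstar i := (hws i hi).2.1
    have hAicard : 0 < ((Ai i).card : ℝ) := by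
      exact_mod_cast (hne _ (hAi i hi)).card_pos
    have hAik : ((Ai i).card : ℝ) ≤ k := by exact_mod_cast hk _ (hAi i hi)
    calc ((Astar.card : ℝ) - 1) * smin s Astar / k ≤ wmstar i / k := by
          apply div_le_div_of_nonneg_right _ hkpos.le; linarith
      _ ≤ wmstar i / (Ai i).card := by
          apply div_le_div_of_nonneg_left hw0 hAicard hAik
  have hprofit : wm s Astar / k ≤ ∑ i ∈ Astar, wmstar i / (Ai i).card := by
    calc wm s Astar / k
        ≤ (Astar.card : ℝ) * (((Astar.card : ℝ) - 1) * smin s Astar / k) := by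
          rw [wm, mul_div_assoc, mul_div_assoc]
          apply mul_le_mul_of_nonneg_left _ (by positivity)
          exact le_mul_of_one_le_left (by positivity) (by linarith)
      _ = ∑ i ∈ Astar, ((Astar.card : ℝ) - 1) * smin s Astar / k := by
          rw [Finset.sum_const, nsmul_eq_mul]
      _ ≤ ∑ i ∈ Astar, wmstar i / (Ai i).card := Finset.sum_le_sum hterm
  calc (∑ i ∈ A, s i) / (harm k * k) ≤ (harm k * wm s Astar) / (harm k * k) := by
        apply div_le_div_of_nonneg_right hwel ?_ <;> positivity
    _ = wm s Astar / k := mul_div_mul_left _ _ (ne_of_gt hharm)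
    _ ≤ _ := hprofit
end

section
/- Critical value for the VCG_s auction, upper side: if v_i > c_i + max_{A∈𝒜}{Σ_{j∈A, j≠i} s_j} − max_{A∈𝒜, i∈A}{Σ_{j∈A, j≠i} s_j}, then i belongs to the trip A* maximizing the surplus welfare Σ_{j∈A} s_j over 𝒜. -/
open Finset

/-- Critical value for the VCG_s auction, upper side: if
`v i > c i + max_{A∈𝒜} Σ_{j∈A, j≠i} s j − max_{A∈𝒜, i∈A} Σ_{j∈A, j≠i} s j`,
then `i` belongs to the trip `A*` maximizing the surplus welfare `Σ_{j∈A} s j`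
over `𝒜` (a nonempty family containing at least one trip with `i`). -/
theorem vcgs_above_critical_wins {ι : Type*} [DecidableEq ι]
    (𝒜 : Finset (Finset ι)) (v c : ι → ℝ) (i : ι)
    (s : ι → ℝ) (hs : s = fun j => v j - c j)
    (M1 M2 : ℝ)
    (hM1ub : ∀ A ∈ 𝒜, (∑ j ∈ A.erase i, s j) ≤ M1)
    (hM1att : ∃ A ∈ 𝒜, (∑ j ∈ A.erase i, s j) = M1)
    (hM2ub : ∀ A ∈ 𝒜, i ∈ A → (∑ j ∈ A.erase i, s j) ≤ M2)
    (hM2att : ∃ A ∈ 𝒜, i ∈ A ∧ (∑ j ∈ A.erase i, s j) = M2)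
    (Astar : Finset ι) (hAstar : Astar ∈ 𝒜)
    (hwin : ∀ A ∈ 𝒜, (∑ j ∈ A, s j) ≤ ∑ j ∈ Astar, s j)
    (hhigh : v i > c i + M1 - M2) :
    i ∈ Astar := by
  by_contra hi
  obtain ⟨A0, hA0, hiA0, hA0M⟩ := hM2att
  have hsi : s i > M1 - M2 := by rw [hs]; simpa using by linarith
  have hsum0 : (∑ j ∈ A0, s j) = s i + M2 := by
    rw [← hA0M, ← Finset.add_sum_erase _ _ hiA0]
  have h1 : (∑ j ∈ Astar, s j) ≤ M1 := by
    have : Astar.erase i = Astar := Finset.erase_eq_of_notMem hi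
    have := hM1ub Astar hAstar
    rwa [Finset.erase_eq_of_notMem hi] at this
  have := hwin A0 hA0
  rw [hsum0] at this
  linarith
end

section
/- The VCG_s auction is budget-balanced: if every A ∈ 𝒜 satisfies Σ_{i∈A} c_i ≥ cost(A) and v_i ≥ c_i for all i ∈ A, then the winning trip A* satisfies Σ_{i∈A*} p_i ≥ cost(A*), where p_i = c_i + max_{A∈𝒜}{Σ_{j∈A, j≠i} s_j} − Σ_{j∈A*, j≠i} s_j for i ∈ A*; equivalently the profit term p_i − c_i is nonnegative for every winner i. -/
open Finset

/-- The VCG_s auction is budget-balanced: if every `A ∈ 𝒜` satisfies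
`Σ_{i∈A} c i ≥ cost A` and `v i ≥ c i` for all `i ∈ A`, then the winning trip `A*`
(the maximizer of `Σ_{j∈A} s j`) satisfies `Σ_{i∈A*} p i ≥ cost A*`, where winners
pay `p i = c i + max_{A∈𝒜} Σ_{j∈A, j≠i} s j − Σ_{j∈A*, j≠i} s j`; equivalently the
profit term `p i − c i` is nonnegative for every winner `i`. -/
theorem vcgs_budget_balanced {ι : Type*} [DecidableEq ι]
    (𝒜 : Finset (Finset ι)) (v c : ι → ℝ) (cost : Finset ι → ℝ)
    (s : ι → ℝ) (hs : s = fun j => v j - c j)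
    (hfeas : ∀ A ∈ 𝒜, cost A ≤ ∑ i ∈ A, c i ∧ ∀ i ∈ A, c i ≤ v i)
    (Astar : Finset ι) (hAstar : Astar ∈ 𝒜)
    (hwin : ∀ A ∈ 𝒜, (∑ j ∈ A, s j) ≤ ∑ j ∈ Astar, s j)
    (M : ι → ℝ)
    (hMub : ∀ i, ∀ A ∈ 𝒜, (∑ j ∈ A.erase i, s j) ≤ M i)
    (p : ι → ℝ)
    (hp : ∀ i ∈ Astar, p i = c i + M i - ∑ j ∈ Astar.erase i, s j)
    (hp0 : ∀ i ∉ Astar, p i = 0) :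
    (∀ i ∈ Astar, c i ≤ p i) ∧ cost Astar ≤ ∑ i ∈ Astar, p i := by
  have hkey : ∀ i ∈ Astar, c i ≤ p i := by
    intro i hi
    rw [hp i hi]
    have := hMub i Astar hAstar
    linarith
  refine ⟨hkey, ?_⟩
  calc cost Astar ≤ ∑ i ∈ Astar, c i := (hfeas Astar hAstar).1
    _ ≤ ∑ i ∈ Astar, p i := Finset.sum_le_sum hkey
end

section
/- WMS dominates UMS in surplus payment under disjointness: let A* be the winner of the weighted variant (maximizing wm(A) = |A|·s_min(A)) and A'* the winner of the unweighted variant (maximizing s_min(A)). If A* ∩ A'* = ∅ and |A'_i| = |A*| for all i ∈ A*, then the surplus payment of the weighted variant, sp(A*) = Σ_{i∈A*} wm*_i/|A'_i|, is at least the surplus payment of the unweighted variant, sp(A'*) = Σ_{i∈A'*} ss_i, where ss_i = max(max{s_min(A) : A∈𝒜, i∉A}, 0). -/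
open Finset

/-- WMS dominates UMS in surplus payment under disjointness: let `A*`
be the winner of the weighted variant (maximizing `wm`) and `A'*` the winner of the
unweighted variant (maximizing `s_min`).  If `A* ∩ A'* = ∅` and `|A'_i| = |A*|` for
all `i ∈ A*`, then `sp(A*) = Σ_{i∈A*} wm*_i/|A'_i| ≥ Σ_{i∈A'*} ss_i = sp(A'*)`,
where `ss_i = max(max{s_min(A) : A∈𝒜, i∉A}, 0)`. -/
theorem wms_dominates_ums {ι : Type*} [DecidableEq ι]
    (𝒜 : Finset (Finset ι)) (s : ι → ℝ)
    (hs : ∀ i, 0 ≤ s i) (hne : ∀ A ∈ 𝒜, A.Nonempty)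
    -- weighted winner
    (Astar : Finset ι) (hAstar : Astar ∈ 𝒜)
    (hwinw : ∀ A ∈ 𝒜, wm s A ≤ wm s Astar)
    -- unweighted winner
    (A'star : Finset ι) (hA'star : A'star ∈ 𝒜)
    (hwinu : ∀ A ∈ 𝒜, smin s A ≤ smin s A'star)
    -- hypotheses of the theorem
    (hdisj : Disjoint Astar A'star)
    (Ai : ι → Finset ι) (hAicard : ∀ i ∈ Astar, (Ai i).card = Astar.card)
    -- wm*_i = max(max{wm(A) : A ∈ 𝒜, i ∉ A}, 0)
    (wmstar : ι → ℝ)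
    (hws : ∀ i ∈ Astar,
      (∀ A ∈ 𝒜, i ∉ A → wm s A ≤ wmstar i) ∧ 0 ≤ wmstar i ∧
      (wmstar i = 0 ∨ ∃ A ∈ 𝒜, i ∉ A ∧ wm s A = wmstar i))
    -- ss_i = max(max{s_min(A) : A ∈ 𝒜, i ∉ A}, 0)
    (ss : ι → ℝ)
    (hss : ∀ i ∈ A'star,
      (∀ A ∈ 𝒜, i ∉ A → smin s A ≤ ss i) ∧ 0 ≤ ss i ∧
      (ss i = 0 ∨ ∃ A ∈ 𝒜, i ∉ A ∧ smin s A = ss i)) :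
    (∑ i ∈ A'star, ss i) ≤ ∑ i ∈ Astar, wmstar i / (Ai i).card := by

  have hA'ne := hne A'star hA'star
  have hAne := hne Astar hAstar
  have hsminnn : 0 ≤ smin s A'star := by
    unfold smin; rw [dif_pos hA'ne]
    exact Finset.le_inf' hA'ne s (fun i _ => hs i)
  have h1 : ∀ i ∈ A'star, ss i ≤ smin s A'star := by
    intro i hi
    obtain ⟨hub, hnn, hcase⟩ := hss i hi
    rcases hcase with h0 | ⟨A, hA, _, hA2⟩
    · rw [h0]; exact hsminnn
    · rw [← hA2]; exact hwinu A hA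
  have hL : ∑ i ∈ A'star, ss i ≤ wm s A'star := by
    calc ∑ i ∈ A'star, ss i ≤ ∑ _i ∈ A'star, smin s A'star := Finset.sum_le_sum h1
    _ = A'star.card * smin s A'star := by rw [Finset.sum_const, nsmul_eq_mul]
    _ = wm s A'star := rfl
  have hcardpos : (0:ℝ) < Astar.card := by exact_mod_cast Finset.card_pos.mpr hAne
  have h2 : ∀ i ∈ Astar, wm s A'star / Astar.card ≤ wmstar i / (Ai i).card := by
    intro i hi
    rw [hAicard i hi]
    exact div_le_div_of_nonneg_right ((hws i hi).1 A'star hA'star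
      (Finset.disjoint_left.mp hdisj hi)) hcardpos.le
  have hR : wm s A'star ≤ ∑ i ∈ Astar, wmstar i / (Ai i).card := by
    calc wm s A'star = Astar.card * (wm s A'star / Astar.card) := by
          field_simp
    _ = ∑ _i ∈ Astar, wm s A'star / Astar.card := by
          rw [Finset.sum_const, nsmul_eq_mul]
    _ ≤ ∑ i ∈ Astar, wmstar i / (Ai i).card := Finset.sum_le_sum h2
  exact hL.trans hR
end

section
/- If the passenger cost may depend on the trip, the WMS auction is not strategy-proof: there exists an instance with two passengers and feasible trips 𝒜 = {A', A''} with A' = {1,2} and A'' = {1}, trip-dependent costs c_1(A') > c_1(A''), and bids such that when both passengers bid truthfully the winner is A' (wm(A') > wm(A'')), but passenger 1 can strictly increase their utility by lowering their bid so that the winner switches to A''. -/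
open Finset

/-- Weighted minimum surplus with trip-dependent costs:
`wm(A) = |A| · min_{i∈A} (b i − c i A)`. -/
noncomputable def wmc {ι : Type*} (b : ι → ℝ) (cf : ι → Finset ι → ℝ)
    (A : Finset ι) : ℝ :=
  A.card * smin (fun i => b i - cf i A) A

/-- If the passenger cost may depend on the trip, the WMS auction is
not strategy-proof: there is an instance with two passengers, feasible trips
`𝒜 = {A', A''}` with `A' = {1,2}` and `A'' = {1}`, trip-dependent costs
`c_1(A') > c_1(A'')`, and values such that under truthful bidding the winner is `A'`
(`wm(A') > wm(A'')`), but passenger 1 can lower their bid so that the winner switches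
to `A''` and—since their price is `p_1 = c_1(A*)`—strictly increase their utility. -/
theorem wms_trip_dependent_cost_not_strategyproof :
    ∃ (v : Fin 2 → ℝ) (cf : Fin 2 → Finset (Fin 2) → ℝ) (b : ℝ)
      (A' A'' : Finset (Fin 2)),
      A' = {0, 1} ∧ A'' = {0} ∧
      -- trip-dependent costs for passenger 1 (index 0)
      cf 0 A'' < cf 0 A' ∧
      -- with truthful bids the winner is A'
      wmc v cf A'' < wmc v cf A' ∧
      -- with the deviating bid b of passenger 1, the winner switches to A''
      wmc (Function.update v 0 b) cf A' < wmc (Function.update v 0 b) cf A'' ∧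
      -- the deviation strictly increases passenger 1's utility (price = c_1(A*))
      v 0 - cf 0 A' < v 0 - cf 0 A'' := by
  have hne : ({0} : Finset (Fin 2)) ≠ {0,1} := by decide
  refine ⟨fun _ => 10, fun _ A => if A = {0,1} then 2 else 1, 2, {0,1}, {0}, rfl, rfl, ?_, ?_, ?_, ?_⟩
  · beta_reduce; rw [if_neg hne, if_pos rfl]; norm_num
  · simp only [wmc, smin, Function.update]
    norm_num [hne, Finset.inf'_insert]
  · simp only [wmc, smin, Function.update]
    norm_num [hne, Finset.inf'_insert]
  · beta_reduce; rw [if_neg hne, if_pos rfl]; norm_num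
end
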